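/- In type $A_2$ with root lattice basis $\alpha_1, \alpha_2$ and Cartan matrix $\begin{pmatrix}2 & -1\\ -1 & 2\end{pmatrix}$, the functions $\mathfrak{J}_\alpha$ defined by the fermionic recursion satisfy $\mathfrak{J}_{a_1\alpha_1 + a_2\alpha_2} = \frac{1}{(q)_{\alpha}^2}\binom{a_1+a_2}{a_1}_q$ for all nonnegative integers $a_1, a_2$, where $(q)_\alpha = \prod_{j=1}^{a_1}(1-q^j)\prod_{j=1}^{a_2}(1-q^j)$. -/

import Mathlib

open Finset

/-- The indeterminate `q`, as a rational function. -/
noncomputable def q : RatFunc ℚ := RatFunc.X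

/-- The q-Pochhammer product `(q)_a = ∏_{m=1}^{a} (1 - q^m)`. -/
noncomputable def qpoch (a : ℕ) : RatFunc ℚ := ∏ m ∈ Finset.range a, (1 - q ^ (m + 1))

/-- The Gaussian binomial coefficient
`[a, b]_q = ∏_{m=1}^a (1-q^m) / (∏_{m=1}^b (1-q^m) ∏_{m=1}^{a-b} (1-q^m))`,
with the convention that it is `0` when `b > a`. -/
noncomputable def gb (a b : ℕ) : RatFunc ℚ :=
  if b ≤ a then qpoch a / (qpoch b * qpoch (a - b)) else 0

/-! The recursion determines `𝔍` uniquely: for `α ≠ 0` the coefficient of `𝔍_α` on its own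
right-hand side is `q^{(α,α)/2}` with a positive exponent. So it suffices to check that the
closed form satisfies the recursion. After clearing `(q)_{a₁}(q)_{a₂}` this is
`∑_{i,j} q^{i²-ij+j²} [a₁,i][a₂,j][i+j,i] / ((q)_i (q)_j) = [a₁+a₂,a₁] / ((q)_{a₁} (q)_{a₂})`.
Expanding `[i+j,i] = ∑_k q^{(i-k)(j-k)} [i,k][j,k]` (q-Vandermonde) splits the exponent as
`k² + (i² - ik) + (j² - jk)`, so the double sum factors. Since `[a,i][i,k] = [a,k][a-k,i-k]`,
each factor is summed by the Cauchy-type identity `∑_t q^{t²+kt} [n,t] / (q)_{t+k} = 1/(q)_{n+k}`,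
leaving `∑_k q^{k²} [a₁,k][a₂,k] / ((q)_{a₁} (q)_{a₂})`, which is q-Vandermonde once more. -/

lemma q_ne_zero : q ≠ 0 := RatFunc.X_ne_zero

lemma one_sub_q_pow_ne_zero {n : ℕ} (hn : n ≠ 0) : 1 - q ^ n ≠ 0 := by
  have h : 1 - q ^ n =
      -algebraMap (Polynomial ℚ) (RatFunc ℚ) (Polynomial.X ^ n - Polynomial.C 1) := by
    simp [q]
  rw [h, neg_ne_zero]
  exact RatFunc.algebraMap_ne_zero (Polynomial.X_pow_sub_C_ne_zero (Nat.pos_of_ne_zero hn) 1)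

lemma qpoch_ne_zero (n : ℕ) : qpoch n ≠ 0 :=
  prod_ne_zero_iff.mpr fun m _ => one_sub_q_pow_ne_zero m.succ_ne_zero

@[simp] lemma qpoch_zero : qpoch 0 = 1 := prod_range_zero _

lemma qpoch_succ (n : ℕ) : qpoch (n + 1) = qpoch n * (1 - q ^ (n + 1)) := prod_range_succ _ _

lemma gb_of_le {n k : ℕ} (h : k ≤ n) : gb n k = qpoch n / (qpoch k * qpoch (n - k)) := if_pos h

lemma gb_add (i j : ℕ) : gb (i + j) i = qpoch (i + j) / (qpoch i * qpoch j) := by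
  rw [gb_of_le (Nat.le_add_right i j), Nat.add_sub_cancel_left]

lemma gb_eq_zero_of_lt {n k : ℕ} (h : n < k) : gb n k = 0 := if_neg (Nat.not_le.mpr h)

@[simp] lemma gb_zero_right (n : ℕ) : gb n 0 = 1 := by
  simp [gb_of_le, qpoch_ne_zero]

@[simp] lemma gb_self (n : ℕ) : gb n n = 1 := by
  simp [gb_of_le, qpoch_ne_zero]

lemma gb_symm {n k : ℕ} (h : k ≤ n) : gb n k = gb n (n - k) := by
  rw [gb_of_le h, gb_of_le (Nat.sub_le n k), Nat.sub_sub_self h, mul_comm]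

-- Both Pascal rules below come down to `1 - q^{n+1} = q^{t+1} (1 - q^{n-t}) + (1 - q^{t+1})`.
lemma exists_gb_succ_succ_eq {n t : ℕ} (h : t < n) : ∃ c,
    gb (n + 1) (t + 1) = c * (1 - q ^ (n + 1)) ∧ gb n (t + 1) = c * (1 - q ^ (n - t)) ∧
      gb n t = c * (1 - q ^ (t + 1)) := by
  obtain ⟨e, rfl⟩ := Nat.exists_eq_add_of_lt h
  refine ⟨qpoch (t + e + 1) / (qpoch (t + 1) * qpoch (e + 1)), ?_, ?_, ?_⟩ <;>
    rw [gb_of_le (by omega)]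
  · rw [qpoch_succ (t + e + 1), show t + e + 1 + 1 - (t + 1) = e + 1 by omega]
    ring
  · rw [show t + e + 1 - (t + 1) = e by omega, show t + e + 1 - t = e + 1 by omega, qpoch_succ e]
    field_simp [qpoch_ne_zero, one_sub_q_pow_ne_zero]
  · rw [show t + e + 1 - t = e + 1 by omega, qpoch_succ t]
    field_simp [qpoch_ne_zero, one_sub_q_pow_ne_zero]

lemma gb_succ_succ (n t : ℕ) : gb (n + 1) (t + 1) = q ^ (t + 1) * gb n (t + 1) + gb n t := by
  rcases lt_trichotomy t n with h | rfl | h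
  · obtain ⟨c, h₁, h₂, h₃⟩ := exists_gb_succ_succ_eq h
    rw [h₁, h₂, h₃, show n + 1 = t + 1 + (n - t) by omega, pow_add]
    ring
  · simp [gb_eq_zero_of_lt (Nat.lt_succ_self t)]
  · simp [gb_eq_zero_of_lt, h, Nat.lt_succ_of_lt h]

lemma gb_succ_succ' (n t : ℕ) : gb (n + 1) (t + 1) = gb n (t + 1) + q ^ (n - t) * gb n t := by
  rcases lt_trichotomy t n with h | rfl | h
  · obtain ⟨c, h₁, h₂, h₃⟩ := exists_gb_succ_succ_eq h
    rw [h₁, h₂, h₃, show n + 1 = n - t + (t + 1) by omega, pow_add]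
    ring
  · simp [gb_eq_zero_of_lt (Nat.lt_succ_self t)]
  · simp [gb_eq_zero_of_lt, h, Nat.lt_succ_of_lt h]

lemma sum_q_pow_mul_gb_mul_gb (a b m : ℕ) :
    ∑ k ∈ range (b + 1), q ^ (k ^ 2 + m * k) * gb a (k + m) * gb b k = gb (a + b) (b + m) := by
  induction b generalizing m with
  | zero => simp
  | succ b ih =>
    have ih' : ∑ k ∈ range (b + 2), q ^ (k ^ 2 + m * k) * gb a (k + m) * gb b k =
        gb (a + b) (b + m) := by
      rw [sum_range_succ, ih, gb_eq_zero_of_lt (Nat.lt_succ_self b), mul_zero, add_zero]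
    have hterm : ∀ k ∈ range (b + 1),
        q ^ ((k + 1) ^ 2 + m * (k + 1)) * gb a (k + 1 + m) * gb (b + 1) (k + 1) =
          q ^ ((k + 1) ^ 2 + m * (k + 1)) * gb a (k + 1 + m) * gb b (k + 1) +
            q ^ (b + (m + 1)) * (q ^ (k ^ 2 + (m + 1) * k) * gb a (k + (m + 1)) * gb b k) := by
      intro k hk
      obtain ⟨c, rfl⟩ := Nat.exists_eq_add_of_le (Nat.lt_succ_iff.mp (mem_range.mp hk))
      rw [gb_succ_succ', Nat.add_sub_cancel_left, show k + 1 + m = k + (m + 1) by ring]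
      ring
    rw [show a + (b + 1) = a + b + 1 by ring, show b + 1 + m = b + m + 1 by ring, gb_succ_succ,
      show b + m + 1 = b + (m + 1) by ring, ← ih, ← ih', mul_sum, sum_range_succ' _ (b + 1),
      sum_range_succ' _ (b + 1), sum_congr rfl hterm, sum_add_distrib]
    simp only [gb_zero_right]
    ring

lemma sum_range_mul_gb_of_le (f : ℕ → RatFunc ℚ) {j N : ℕ} (h : j ≤ N) :
    ∑ k ∈ range (N + 1), f k * gb j k = ∑ k ∈ range (j + 1), f k * gb j k := by
  refine (sum_subset (range_subset_range.2 (by omega)) fun k _ hk => ?_).symm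
  rw [gb_eq_zero_of_lt (by simpa using hk), mul_zero]

lemma sum_zpow_mul_gb_mul_gb_of_le {i j : ℕ} (h : j ≤ i) :
    ∑ k ∈ range (j + 1), q ^ (((i : ℤ) - k) * ((j : ℤ) - k)) * gb i k * gb j k =
      gb (i + j) i := by
  obtain ⟨m, rfl⟩ := Nat.exists_eq_add_of_le h
  rw [← sum_range_reflect, ← sum_q_pow_mul_gb_mul_gb (j + m) j m]
  refine sum_congr rfl fun k hk => ?_
  have hk : k ≤ j := Nat.lt_succ_iff.mp (mem_range.mp hk)
  rw [Nat.add_sub_cancel, gb_symm (show j - k ≤ j + m by omega), gb_symm (Nat.sub_le j k),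
    show j + m - (j - k) = k + m by omega, Nat.sub_sub_self hk,
    show ((j + m : ℕ) - ((j - k : ℕ) : ℤ)) * ((j : ℤ) - (j - k : ℕ)) =
      ((k ^ 2 + m * k : ℕ) : ℤ) by push_cast [hk]; ring, zpow_natCast]

lemma sum_zpow_mul_gb_mul_gb {i j N : ℕ} (hN : j ≤ N) :
    ∑ k ∈ range (N + 1), q ^ (((i : ℤ) - k) * ((j : ℤ) - k)) * gb i k * gb j k =
      gb (i + j) i := by
  rw [sum_range_mul_gb_of_le _ hN]
  rcases le_total j i with h | h
  · exact sum_zpow_mul_gb_mul_gb_of_le h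
  · have hswap : ∀ k : ℕ, q ^ (((i : ℤ) - k) * ((j : ℤ) - k)) * gb i k * gb j k =
        q ^ (((j : ℤ) - k) * ((i : ℤ) - k)) * gb j k * gb i k := fun k => by
      rw [mul_comm ((i : ℤ) - k)]; ring
    simp_rw [hswap]
    rw [sum_range_mul_gb_of_le _ h, sum_zpow_mul_gb_mul_gb_of_le h, add_comm,
      gb_symm (Nat.le_add_right i j), Nat.add_sub_cancel_left]

lemma sum_q_pow_mul_gb_div_qpoch (n k : ℕ) :
    ∑ t ∈ range (n + 1), q ^ (t ^ 2 + k * t) * gb n t / qpoch (t + k) = 1 / qpoch (n + k) := by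
  induction n generalizing k with
  | zero => simp
  | succ n ih =>
    have ih' : ∑ t ∈ range (n + 2), q ^ (t ^ 2 + k * t) * gb n t / qpoch (t + k) =
        1 / qpoch (n + k) := by
      rw [sum_range_succ, ih, gb_eq_zero_of_lt (Nat.lt_succ_self n), mul_zero, zero_div, add_zero]
    have hterm : ∀ t ∈ range (n + 1),
        q ^ ((t + 1) ^ 2 + k * (t + 1)) * gb (n + 1) (t + 1) / qpoch (t + 1 + k) =
          q ^ ((t + 1) ^ 2 + k * (t + 1)) * gb n (t + 1) / qpoch (t + 1 + k) +
            q ^ (n + (k + 1)) * (q ^ (t ^ 2 + (k + 1) * t) * gb n t / qpoch (t + (k + 1))) := by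
      intro t ht
      obtain ⟨c, rfl⟩ := Nat.exists_eq_add_of_le (Nat.lt_succ_iff.mp (mem_range.mp ht))
      rw [gb_succ_succ', Nat.add_sub_cancel_left, show t + 1 + k = t + (k + 1) by ring]
      ring
    have hstep : 1 / qpoch (n + 1 + k) =
        1 / qpoch (n + k) + q ^ (n + (k + 1)) * (1 / qpoch (n + (k + 1))) := by
      rw [show n + 1 + k = n + k + 1 by ring, show n + (k + 1) = n + k + 1 by ring, qpoch_succ]
      field_simp [qpoch_ne_zero, one_sub_q_pow_ne_zero]
      ring
    rw [hstep, ← ih (k + 1), ← ih', mul_sum, sum_range_succ' _ (n + 1),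
      sum_range_succ' _ (n + 1), sum_congr rfl hterm, sum_add_distrib]
    simp only [gb_zero_right]
    ring

lemma gb_mul_gb (k n t : ℕ) : gb (k + n) (k + t) * gb (k + t) k = gb (k + n) k * gb n t := by
  rcases le_or_gt t n with h | h
  · obtain ⟨s, rfl⟩ := Nat.exists_eq_add_of_le h
    rw [← add_assoc, gb_add, gb_add, gb_add, add_assoc, gb_add, ← add_assoc]
    field_simp [qpoch_ne_zero]
  · rw [gb_eq_zero_of_lt h, gb_eq_zero_of_lt (by omega), zero_mul, mul_zero]

lemma sum_zpow_mul_gb_mul_gb_div_qpoch (a k : ℕ) :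
    ∑ i ∈ range (a + 1), q ^ ((i : ℤ) ^ 2 - i * k) * gb a i * gb i k / qpoch i =
      gb a k / qpoch a := by
  rcases lt_or_ge a k with h | h
  · refine (sum_eq_zero fun i hi => ?_).trans (by rw [gb_eq_zero_of_lt h, zero_div])
    rw [gb_eq_zero_of_lt (show i < k by have := mem_range.mp hi; omega), mul_zero, zero_div]
  obtain ⟨n, rfl⟩ := Nat.exists_eq_add_of_le h
  rw [add_assoc, sum_range_add, sum_eq_zero fun i hi => by
      rw [gb_eq_zero_of_lt (mem_range.mp hi), mul_zero, zero_div],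
    zero_add, ← mul_one_div, add_comm k n, ← sum_q_pow_mul_gb_div_qpoch n k, mul_sum,
    add_comm n k]
  refine sum_congr rfl fun t _ => ?_
  rw [show ((k + t : ℕ) : ℤ) ^ 2 - (k + t : ℕ) * k = ((t ^ 2 + k * t : ℕ) : ℤ) by
      push_cast; ring,
    zpow_natCast, mul_assoc _ (gb _ _), gb_mul_gb, add_comm k t]
  ring

lemma sum_sum_zpow_mul_gb_div_qpoch (a b : ℕ) :
    ∑ i ∈ range (a + 1), ∑ j ∈ range (b + 1),
      q ^ ((i : ℤ) ^ 2 - i * j + j ^ 2) * (gb a i * gb b j * gb (i + j) i) /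
        (qpoch i * qpoch j) =
      gb (a + b) a / (qpoch a * qpoch b) := by
  set F : ℕ → ℕ → RatFunc ℚ := fun i k => q ^ ((i : ℤ) ^ 2 - i * k) * gb a i * gb i k / qpoch i
  set G : ℕ → ℕ → RatFunc ℚ := fun j k => q ^ ((j : ℤ) ^ 2 - j * k) * gb b j * gb j k / qpoch j
  have hterm : ∀ i : ℕ, ∀ j ∈ range (b + 1),
      q ^ ((i : ℤ) ^ 2 - i * j + j ^ 2) * (gb a i * gb b j * gb (i + j) i) /
          (qpoch i * qpoch j) =
        ∑ k ∈ range (b + 1), q ^ (k ^ 2) * (F i k * G j k) := by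
    intro i j hj
    rw [← sum_zpow_mul_gb_mul_gb (Nat.lt_succ_iff.mp (mem_range.mp hj)), mul_sum, mul_sum,
      sum_div]
    refine sum_congr rfl fun k _ => ?_
    have hexp : q ^ ((i : ℤ) ^ 2 - i * j + j ^ 2) * q ^ (((i : ℤ) - k) * ((j : ℤ) - k)) =
        q ^ (k ^ 2) * (q ^ ((i : ℤ) ^ 2 - i * k) * q ^ ((j : ℤ) ^ 2 - j * k)) := by
      rw [← zpow_natCast, ← zpow_add₀ q_ne_zero, ← zpow_add₀ q_ne_zero, ← zpow_add₀ q_ne_zero]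
      congr 1
      push_cast
      ring
    simp only [F, G]
    linear_combination (gb a i * gb b j * gb i k * gb j k / (qpoch i * qpoch j)) * hexp
  calc _ = ∑ i ∈ range (a + 1), ∑ j ∈ range (b + 1), ∑ k ∈ range (b + 1),
        q ^ (k ^ 2) * (F i k * G j k) := sum_congr rfl fun i _ => sum_congr rfl (hterm i)
    _ = ∑ k ∈ range (b + 1), q ^ (k ^ 2) *
        ((∑ i ∈ range (a + 1), F i k) * ∑ j ∈ range (b + 1), G j k) := by
        simp_rw [sum_mul_sum, mul_sum]
        exact (sum_congr rfl fun i _ => sum_comm).trans sum_comm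
    _ = (∑ k ∈ range (b + 1), q ^ (k ^ 2 + 0 * k) * gb a (k + 0) * gb b k) /
          (qpoch a * qpoch b) := by
        simp only [F, G, sum_zpow_mul_gb_mul_gb_div_qpoch, sum_div]
        refine sum_congr rfl fun k _ => ?_
        simp only [zero_mul, add_zero]
        ring
    _ = gb (a + b) a / (qpoch a * qpoch b) := by
        rw [sum_q_pow_mul_gb_mul_gb, add_zero, gb_symm (Nat.le_add_left b a), Nat.add_sub_cancel]

lemma mul_lt_sq_add_sq {m n : ℕ} (h : (m, n) ≠ (0, 0)) : m * n < m ^ 2 + n ^ 2 := by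
  rcases Nat.eq_zero_or_pos m with rfl | hm
  · simpa [Nat.pos_iff_ne_zero] using h
  · nlinarith

-- `b₁ b₂ ≤ b₁² + b₂²`, so the truncated subtraction in the exponent is exact.
noncomputable def fermionicRHS (J : ℕ × ℕ → RatFunc ℚ) (α : ℕ × ℕ) : RatFunc ℚ :=
  ∑ β ∈ Iic α,
    q ^ (β.1 ^ 2 + β.2 ^ 2 - β.1 * β.2) / (qpoch (α.1 - β.1) * qpoch (α.2 - β.2)) * J β

lemma fermionicRHS_gb (α : ℕ × ℕ) :
    fermionicRHS (fun β => gb (β.1 + β.2) β.1 / (qpoch β.1 * qpoch β.2) ^ 2) α =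
      gb (α.1 + α.2) α.1 / (qpoch α.1 * qpoch α.2) ^ 2 := by
  obtain ⟨a, b⟩ := α
  have hterm : ∀ i ∈ range (a + 1), ∀ j ∈ range (b + 1),
      q ^ (i ^ 2 + j ^ 2 - i * j) / (qpoch (a - i) * qpoch (b - j)) *
          (gb (i + j) i / (qpoch i * qpoch j) ^ 2) =
        q ^ ((i : ℤ) ^ 2 - i * j + j ^ 2) * (gb a i * gb b j * gb (i + j) i) /
          (qpoch i * qpoch j) / (qpoch a * qpoch b) := by
    intro i hi j hj
    rw [gb_of_le (Nat.lt_succ_iff.mp (mem_range.mp hi)),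
      gb_of_le (Nat.lt_succ_iff.mp (mem_range.mp hj)), ← zpow_natCast,
      show ((i ^ 2 + j ^ 2 - i * j : ℕ) : ℤ) = (i : ℤ) ^ 2 - i * j + j ^ 2 by
        push_cast [(by nlinarith : i * j ≤ i ^ 2 + j ^ 2)]; ring]
    field_simp [qpoch_ne_zero]
  rw [fermionicRHS, ← Iic_product_Iic, sum_product, ← Nat.range_succ_eq_Iic,
    ← Nat.range_succ_eq_Iic]
  simp_rw [sum_congr rfl fun i hi => sum_congr rfl (hterm i hi), ← sum_div]
  rw [sum_sum_zpow_mul_gb_div_qpoch, div_div, ← sq]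

lemma eq_of_eq_fermionicRHS {J F : ℕ × ℕ → RatFunc ℚ} (hJ : ∀ α, J α = fermionicRHS J α)
    (hF : ∀ α, F α = fermionicRHS F α) (h0 : J (0, 0) = F (0, 0)) : J = F := by
  funext α
  induction α using WellFoundedLT.induction with
  | _ α ih =>
  by_cases hα : α = (0, 0)
  · rw [hα, h0]
  have hdiff : fermionicRHS J α - fermionicRHS F α =
      q ^ (α.1 ^ 2 + α.2 ^ 2 - α.1 * α.2) * (J α - F α) := by
    rw [fermionicRHS, fermionicRHS, ← sum_sub_distrib,
      sum_eq_single_of_mem α (mem_Iic.2 le_rfl)]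
    · simp only [Nat.sub_self, qpoch_zero, mul_one, div_one, mul_sub]
    · intro β hβ hne
      rw [ih β (lt_of_le_of_ne (mem_Iic.1 hβ) hne), sub_self]
  have he := Nat.sub_ne_zero_of_lt (mul_lt_sq_add_sq hα)
  have hmul : (1 - q ^ (α.1 ^ 2 + α.2 ^ 2 - α.1 * α.2)) * (J α - F α) = 0 := by
    linear_combination hJ α - hF α + hdiff
  exact sub_eq_zero.mp ((mul_eq_zero.mp hmul).resolve_left (one_sub_q_pow_ne_zero he))

/-- in type `A₂`, if `𝔍` satisfies the fermionic recursion
`𝔍₀ = 1`, `𝔍_α = ∑_{0 ≤ β ≤ α} q^{(β,β)/2}/(q)_{α-β} 𝔍_β`, where for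
`β = b₁α₁ + b₂α₂` one has `(β,β)/2 = b₁² - b₁b₂ + b₂²`, then
`𝔍_{a₁α₁+a₂α₂} = [a₁+a₂, a₁]_q / (q)_α²` with `(q)_α = (q)_{a₁}(q)_{a₂}`.
(Note `b₁ b₂ ≤ b₁² + b₂²`, so the truncated natural subtraction in the exponent
computes `b₁² - b₁b₂ + b₂²` exactly.) -/
theorem stmt_7 (J : ℕ × ℕ → RatFunc ℚ)
    (hJ : ∀ α : ℕ × ℕ,
      J α = ∑ β ∈ Finset.Iic α,
        q ^ (β.1 ^ 2 + β.2 ^ 2 - β.1 * β.2) /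
          (qpoch (α.1 - β.1) * qpoch (α.2 - β.2)) * J β)
    (hJ0 : J (0, 0) = 1) :
    ∀ a₁ a₂ : ℕ,
      J (a₁, a₂) = gb (a₁ + a₂) a₁ / (qpoch a₁ * qpoch a₂) ^ 2 := by
  have h := eq_of_eq_fermionicRHS hJ (fun α => (fermionicRHS_gb α).symm) (by simp [hJ0])
  exact fun a₁ a₂ => congrFun h (a₁, a₂)
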